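/- (Quantitative BBBV) Let Q be a quantum algorithm making T queries to a string x ∈ {±1}^N, and let y be a random string such that Pr[x_i ≠ y_i] ≤ p for every coordinate i. Then for any r > 0, Pr_y[ |Pr[Q^y = 1] − Pr[Q^x = 1]| ≥ r ] ≤ 64 p T² / r². -/

import Mathlib

open Finset Matrix
open scoped Classical ComplexOrder

/-- The phase oracle for `x ∈ {±1}^N` acting on the query register: the diagonal unitary
`O_x |i, w⟩ = x_i |i, w⟩` (with `true` encoding `-1`). -/
noncomputable def oracleMat {N d : ℕ} (x : Fin N → Bool) :
    Matrix (Fin N × Fin d) (Fin N × Fin d) ℂ :=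
  Matrix.diagonal (fun p => if x p.1 then -1 else 1)

/-- The state of a quantum query algorithm after `t` queries: alternately apply the
unitaries `U_0, U_1, …` and the phase oracle `O_x`, starting from `ψ₀`. -/
noncomputable def runState {N d : ℕ} (U : ℕ → Matrix (Fin N × Fin d) (Fin N × Fin d) ℂ)
    (x : Fin N → Bool) (ψ0 : Fin N × Fin d → ℂ) : ℕ → (Fin N × Fin d → ℂ)
  | 0 => (U 0).mulVec ψ0
  | (t + 1) => (U (t + 1)).mulVec ((oracleMat x).mulVec (runState U x ψ0 t))

/-- The acceptance probability of the algorithm: `⟨ψ, M ψ⟩` for the POVM element `M`. -/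
noncomputable def accProb {N d : ℕ} (M : Matrix (Fin N × Fin d) (Fin N × Fin d) ℂ)
    (ψ : Fin N × Fin d → ℂ) : ℝ :=
  (star ψ ⬝ᵥ M.mulVec ψ).re

/-!
By the hybrid argument, after `T` queries the runs on `y` and on `x` are at distance at most
`∑ₜ ‖(O_y - O_x) ψₜ‖ = 2 ∑ₜ √(Wₜ(y))`, where `ψₜ` is the `x`-run and `Wₜ(y)` its query magnitude
on the coordinates where `y` and `x` differ. Since `0 ≤ M ≤ 1`, acceptance probabilities of unit
states differ by at most twice their distance, so by Cauchy–Schwarz the squared deviation is at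
most `16 T ∑ₜ Wₜ(y)`. Averaging over `y` gives `E Wₜ ≤ p`, hence `E[deviation²] ≤ 16 p T²`, and
Markov's inequality for the squared deviation finishes.
-/

open WithLp

section
variable {ι : Type*} [Fintype ι]

lemma norm_toLp_sq_eq_re_dotProduct (v : ι → ℂ) : ‖toLp 2 v‖ ^ 2 = (star v ⬝ᵥ v).re := by
  rw [@norm_sq_eq_re_inner ℂ, EuclideanSpace.inner_toLp_toLp, dotProduct_comm]
  rfl

lemma norm_toLp_mulVec_of_mem_unitaryGroup [DecidableEq ι] {A : Matrix ι ι ℂ}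
    (hA : A ∈ unitaryGroup ι ℂ) (v : ι → ℂ) : ‖toLp 2 (A *ᵥ v)‖ = ‖toLp 2 v‖ := by
  rw [← sq_eq_sq₀ (norm_nonneg _) (norm_nonneg _), norm_toLp_sq_eq_re_dotProduct,
    norm_toLp_sq_eq_re_dotProduct, star_mulVec, dotProduct_mulVec, vecMul_vecMul,
    ← star_eq_conjTranspose, mem_unitaryGroup_iff'.mp hA, vecMul_one]

lemma norm_toLp_mulVec_sq (B : Matrix ι ι ℂ) (v : ι → ℂ) :
    ‖toLp 2 (B *ᵥ v)‖ ^ 2 = (star v ⬝ᵥ (Bᴴ * B) *ᵥ v).re := by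
  rw [norm_toLp_sq_eq_re_dotProduct, ← mulVec_mulVec, dotProduct_mulVec (star v), star_mulVec]

lemma norm_toLp_mulVec_le_of_posSemidef_one_sub {B : Matrix ι ι ℂ} [DecidableEq ι]
    (hB : (1 - Bᴴ * B).PosSemidef) (v : ι → ℂ) : ‖toLp 2 (B *ᵥ v)‖ ≤ ‖toLp 2 v‖ := by
  have h := (Complex.le_def.mp (hB.dotProduct_mulVec_nonneg v)).1
  rw [sub_mulVec, one_mulVec, dotProduct_sub, Complex.sub_re, Complex.zero_re, sub_nonneg,
    ← norm_toLp_mulVec_sq, ← norm_toLp_sq_eq_re_dotProduct] at h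
  exact (sq_le_sq₀ (norm_nonneg _) (norm_nonneg _)).mp h

open scoped MatrixOrder Matrix.Norms.L2Operator in
lemma Matrix.PosSemidef.exists_eq_conjTranspose_mul_self {M : Matrix ι ι ℂ} (hM : M.PosSemidef) :
    ∃ B : Matrix ι ι ℂ, M = Bᴴ * B :=
  CStarAlgebra.nonneg_iff_eq_star_mul_self.mp hM.nonneg

/-- Writing `M = Bᴴ B`, the form is `v ↦ ‖B v‖²`, and `1 - M ≥ 0` makes `B` a contraction. -/
lemma abs_re_dotProduct_mulVec_sub_le [DecidableEq ι] {M : Matrix ι ι ℂ} (hM : M.PosSemidef)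
    (hM1 : (1 - M).PosSemidef) (a b : ι → ℂ) :
    |(star a ⬝ᵥ M *ᵥ a).re - (star b ⬝ᵥ M *ᵥ b).re|
      ≤ (‖toLp 2 a‖ + ‖toLp 2 b‖) * ‖toLp 2 (a - b)‖ := by
  obtain ⟨B, rfl⟩ := hM.exists_eq_conjTranspose_mul_self
  have hBa := norm_toLp_mulVec_le_of_posSemidef_one_sub hM1 a
  have hBb := norm_toLp_mulVec_le_of_posSemidef_one_sub hM1 b
  have hBab : |‖toLp 2 (B *ᵥ a)‖ - ‖toLp 2 (B *ᵥ b)‖| ≤ ‖toLp 2 (a - b)‖ := by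
    refine (abs_norm_sub_norm_le _ _).trans ?_
    rw [← toLp_sub, ← mulVec_sub]
    exact norm_toLp_mulVec_le_of_posSemidef_one_sub hM1 _
  rw [← norm_toLp_mulVec_sq, ← norm_toLp_mulVec_sq, sq_sub_sq, abs_mul,
    abs_of_nonneg (by positivity : (0:ℝ) ≤ ‖toLp 2 (B *ᵥ a)‖ + ‖toLp 2 (B *ᵥ b)‖)]
  exact mul_le_mul (add_le_add hBa hBb) hBab (abs_nonneg _) (by positivity)

end

section
variable {α κ : Type*} [Fintype α] [Fintype κ]

lemma sum_ite_le_mul_sq_le_sum_mul_sq {q : α → ℝ} (hq : ∀ a, 0 ≤ q a) (f : α → ℝ) {r : ℝ}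
    (hr : 0 ≤ r) : (∑ a, if r ≤ f a then q a else 0) * r ^ 2 ≤ ∑ a, q a * f a ^ 2 := by
  rw [sum_mul]
  refine sum_le_sum fun a _ => ?_
  split_ifs with h
  · exact mul_le_mul_of_nonneg_left (pow_le_pow_left₀ hr h 2) (hq a)
  · rw [zero_mul]
    exact mul_nonneg (hq a) (sq_nonneg _)

lemma sum_mul_sum_filter_le (q : α → ℝ) {m : κ → ℝ} (hm : ∀ i, 0 ≤ m i) (E : α → κ → Prop)
    [∀ a i, Decidable (E a i)] {p : ℝ} (hp : ∀ i, (∑ a, if E a i then q a else 0) ≤ p) :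
    ∑ a, q a * ∑ i with E a i, m i ≤ p * ∑ i, m i := by
  calc ∑ a, q a * ∑ i with E a i, m i
      = ∑ i, (∑ a, if E a i then q a else 0) * m i := by
        simp_rw [sum_filter, mul_sum, sum_mul, ite_mul, zero_mul, mul_ite, mul_zero]
        rw [sum_comm]
    _ ≤ ∑ i, p * m i := sum_le_sum fun i _ => mul_le_mul_of_nonneg_right (hp i) (hm i)
    _ = p * ∑ i, m i := (mul_sum _ _ _).symm

end

lemma oracleMat_mem_unitaryGroup {N d : ℕ} (x : Fin N → Bool) :
    oracleMat (d := d) x ∈ unitaryGroup (Fin N × Fin d) ℂ := by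
  rw [mem_unitaryGroup_iff', oracleMat, star_eq_conjTranspose, diagonal_conjTranspose,
    diagonal_mul_diagonal, ← diagonal_one]
  congr 1
  funext p
  cases h : x p.1 <;> simp [h]

/-- The paper's query magnitude of `v` at oracle index `i`, summed over the workspace register. -/
noncomputable def queryMass {N d : ℕ} (v : Fin N × Fin d → ℂ) (i : Fin N) : ℝ :=
  ∑ j, ‖v (i, j)‖ ^ 2

lemma queryMass_nonneg {N d : ℕ} (v : Fin N × Fin d → ℂ) (i : Fin N) : 0 ≤ queryMass v i := by
  unfold queryMass; positivity

lemma sum_queryMass {N d : ℕ} (v : Fin N × Fin d → ℂ) :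
    ∑ i, queryMass v i = ‖toLp 2 v‖ ^ 2 := by
  rw [EuclideanSpace.norm_sq_eq, Fintype.sum_prod_type]
  rfl

lemma norm_sign_sub_sign_sq (a b : Bool) :
    ‖((if a then -1 else 1) - (if b then -1 else 1) : ℂ)‖ ^ 2 = if a ≠ b then 4 else 0 := by
  cases a <;> cases b <;> norm_num

lemma norm_oracleMat_sub_mulVec_sq {N d : ℕ} (y x : Fin N → Bool) (v : Fin N × Fin d → ℂ) :
    ‖toLp 2 ((oracleMat y - oracleMat x) *ᵥ v)‖ ^ 2 = 4 * ∑ i with y i ≠ x i, queryMass v i := by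
  rw [EuclideanSpace.norm_sq_eq, Fintype.sum_prod_type, sum_filter, mul_sum]
  refine sum_congr rfl fun i _ => ?_
  simp only [oracleMat, sub_mulVec, mulVec_diagonal, Pi.sub_apply, ← sub_mul, norm_mul, mul_pow,
    norm_sign_sub_sign_sq, ← mul_sum]
  split_ifs <;> simp [queryMass]

section
variable {N d : ℕ} {U : ℕ → Matrix (Fin N × Fin d) (Fin N × Fin d) ℂ} (ψ0 : Fin N × Fin d → ℂ)

lemma norm_runState (hU : ∀ t, U t ∈ unitaryGroup (Fin N × Fin d) ℂ) (z : Fin N → Bool)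
    (t : ℕ) :
    ‖toLp 2 (runState U z ψ0 t)‖ = ‖toLp 2 ψ0‖ := by
  induction t with
  | zero => exact norm_toLp_mulVec_of_mem_unitaryGroup (hU 0) ψ0
  | succ t ih =>
    rw [runState, norm_toLp_mulVec_of_mem_unitaryGroup (hU _),
      norm_toLp_mulVec_of_mem_unitaryGroup (oracleMat_mem_unitaryGroup z), ih]

/-- Hybrid argument: unitaries preserve the distance between the two runs, and query `s` adds at
most the error of replacing `O_x` by `O_y` on the `x`-run. -/
lemma norm_runState_sub_le (hU : ∀ t, U t ∈ unitaryGroup (Fin N × Fin d) ℂ)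
    (y x : Fin N → Bool) (t : ℕ) :
    ‖toLp 2 (runState U y ψ0 t - runState U x ψ0 t)‖
      ≤ ∑ s ∈ range t, ‖toLp 2 ((oracleMat y - oracleMat x) *ᵥ runState U x ψ0 s)‖ := by
  induction t with
  | zero => simp [runState]
  | succ t ih =>
    have hsplit : oracleMat y *ᵥ runState U y ψ0 t - oracleMat x *ᵥ runState U x ψ0 t
        = oracleMat y *ᵥ (runState U y ψ0 t - runState U x ψ0 t)
          + (oracleMat y - oracleMat x) *ᵥ runState U x ψ0 t := by
      rw [mulVec_sub, sub_mulVec]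
      abel
    rw [runState, runState, ← mulVec_sub, norm_toLp_mulVec_of_mem_unitaryGroup (hU _), hsplit,
      sum_range_succ, toLp_add]
    refine (norm_add_le _ _).trans (add_le_add_left ?_ _)
    rwa [norm_toLp_mulVec_of_mem_unitaryGroup (oracleMat_mem_unitaryGroup y)]

theorem sq_abs_accProb_runState_sub_le (hU : ∀ t, U t ∈ unitaryGroup (Fin N × Fin d) ℂ)
    (hψ0 : ‖toLp 2 ψ0‖ = 1) {M : Matrix (Fin N × Fin d) (Fin N × Fin d) ℂ} (hM : M.PosSemidef)
    (hM1 : (1 - M).PosSemidef)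
    (y x : Fin N → Bool) (T : ℕ) :
    |accProb M (runState U y ψ0 T) - accProb M (runState U x ψ0 T)| ^ 2
      ≤ 16 * T * ∑ t ∈ range T, ∑ i with y i ≠ x i, queryMass (runState U x ψ0 t) i := by
  set a : ℕ → ℝ := fun s => ‖toLp 2 ((oracleMat y - oracleMat x) *ᵥ runState U x ψ0 s)‖
  have hdiff : |accProb M (runState U y ψ0 T) - accProb M (runState U x ψ0 T)|
      ≤ 2 * ∑ s ∈ range T, a s := by
    refine (abs_re_dotProduct_mulVec_sub_le hM hM1 _ _).trans ?_
    rw [norm_runState _ hU, norm_runState _ hU, hψ0, one_add_one_eq_two]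
    exact mul_le_mul_of_nonneg_left (norm_runState_sub_le ψ0 hU y x T) zero_le_two
  calc |accProb M (runState U y ψ0 T) - accProb M (runState U x ψ0 T)| ^ 2
      ≤ 4 * (∑ s ∈ range T, a s) ^ 2 := by
        nlinarith [abs_nonneg (accProb M (runState U y ψ0 T) - accProb M (runState U x ψ0 T))]
    _ ≤ 4 * (T * ∑ s ∈ range T, a s ^ 2) := by
        simpa using mul_le_mul_of_nonneg_left (sq_sum_le_card_mul_sum_sq (s := range T) (f := a))
          zero_le_four
    _ = 16 * T * ∑ t ∈ range T, ∑ i with y i ≠ x i, queryMass (runState U x ψ0 t) i := by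
        simp only [a, norm_oracleMat_sub_mulVec_sq, ← mul_sum]
        ring

end

theorem quantitative_bbbv_general (N d T : ℕ)
    (U : ℕ → Matrix (Fin N × Fin d) (Fin N × Fin d) ℂ)
    (hU : ∀ t, U t ∈ Matrix.unitaryGroup (Fin N × Fin d) ℂ)
    (ψ0 : Fin N × Fin d → ℂ) (hψ0 : star ψ0 ⬝ᵥ ψ0 = 1)
    (M : Matrix (Fin N × Fin d) (Fin N × Fin d) ℂ)
    (hM : M.PosSemidef) (hM1 : (1 - M).PosSemidef)
    (x : Fin N → Bool)
    (q : (Fin N → Bool) → ℝ) (hq0 : ∀ y, 0 ≤ q y)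
    (p : ℝ) (hp : ∀ i : Fin N, (∑ y : Fin N → Bool, if y i ≠ x i then q y else 0) ≤ p)
    (r : ℝ) (hr : 0 < r) :
    (∑ y : Fin N → Bool,
        if r ≤ |accProb M (runState U y ψ0 T) - accProb M (runState U x ψ0 T)| then q y
        else 0)
      ≤ 64 * p * T ^ 2 / r ^ 2 := by
  set D : (Fin N → Bool) → ℝ :=
    fun y => |accProb M (runState U y ψ0 T) - accProb M (runState U x ψ0 T)|
  set W : (Fin N → Bool) → ℕ → ℝ :=
    fun y t => ∑ i with y i ≠ x i, queryMass (runState U x ψ0 t) i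
  have hψ : ‖toLp 2 ψ0‖ = 1 := by
    rw [← pow_eq_one_iff_of_nonneg (norm_nonneg _) two_ne_zero, norm_toLp_sq_eq_re_dotProduct,
      hψ0, Complex.one_re]
  have hW : ∀ t, ∑ y, q y * W y t ≤ p := fun t => by
    simpa [sum_queryMass, norm_runState _ hU, hψ] using
      sum_mul_sum_filter_le q (queryMass_nonneg (runState U x ψ0 t)) (fun y i => y i ≠ x i) hp
  have hED : ∑ y, q y * D y ^ 2 ≤ 16 * p * T ^ 2 := calc
    ∑ y, q y * D y ^ 2 ≤ ∑ y, q y * (16 * T * ∑ t ∈ range T, W y t) :=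
      sum_le_sum fun y _ => mul_le_mul_of_nonneg_left
        (sq_abs_accProb_runState_sub_le ψ0 hU hψ hM hM1 y x T) (hq0 y)
    _ = 16 * T * ∑ t ∈ range T, ∑ y, q y * W y t := by
      simp_rw [mul_sum, sum_comm (s := univ)]
      exact sum_congr rfl fun t _ => sum_congr rfl fun y _ => by ring
    _ ≤ 16 * T * ∑ t ∈ range T, p := by gcongr with t; exact hW t
    _ = 16 * p * T ^ 2 := by rw [sum_const, card_range, nsmul_eq_mul]; ring
  -- forces `0 ≤ p T²`, which is what allows weakening `16` to `64`
  have hED0 : 0 ≤ ∑ y, q y * D y ^ 2 := sum_nonneg fun y _ => mul_nonneg (hq0 y) (sq_nonneg _)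
  rw [le_div_iff₀ (by positivity)]
  linarith [sum_ite_le_mul_sq_le_sum_mul_sq hq0 D hr.le]

/-- Quantitative BBBV: let `Q` be a quantum algorithm making `T` queries to `x ∈ {±1}^N`
(unitaries `U_t`, unit initial state `ψ₀`, POVM element `0 ≤ M ≤ I`), and let `y` be drawn
from a distribution `q` such that `Pr[y_i ≠ x_i] ≤ p` for every coordinate `i`. Then for any
`r > 0`, `Pr_y[|Pr[Q^y = 1] − Pr[Q^x = 1]| ≥ r] ≤ 64 p T² / r²`. -/
theorem quantitative_bbbv (N d T : ℕ)
    (U : ℕ → Matrix (Fin N × Fin d) (Fin N × Fin d) ℂ)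
    (hU : ∀ t, U t ∈ Matrix.unitaryGroup (Fin N × Fin d) ℂ)
    (ψ0 : Fin N × Fin d → ℂ) (hψ0 : star ψ0 ⬝ᵥ ψ0 = 1)
    (M : Matrix (Fin N × Fin d) (Fin N × Fin d) ℂ)
    (hM : M.PosSemidef) (hM1 : (1 - M).PosSemidef)
    (x : Fin N → Bool)
    (q : (Fin N → Bool) → ℝ) (hq0 : ∀ y, 0 ≤ q y) (hq1 : ∑ y, q y = 1)
    (p : ℝ) (hp : ∀ i : Fin N, (∑ y : Fin N → Bool, if y i ≠ x i then q y else 0) ≤ p)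
    (r : ℝ) (hr : 0 < r) :
    (∑ y : Fin N → Bool,
        if r ≤ |accProb M (runState U y ψ0 T) - accProb M (runState U x ψ0 T)| then q y
        else 0)
      ≤ 64 * p * T ^ 2 / r ^ 2 :=
  quantitative_bbbv_general N d T U hU ψ0 hψ0 M hM hM1 x q hq0 p hp r hr
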